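/- arXiv:2407.01912 — 5 statements merged into one kernel-verified Lean document; each statement's English description precedes it below -/
import Mathlib

section
/- Let H_ua ∈ ℂ^{N_a×N_u}, H_ur ∈ ℂ^{N_r×N_u}, H_ra ∈ ℂ^{N_a×N_r} be fixed channel matrices, σ_r², σ_a² > 0 noise variances, and P_ua, P_ur, P_r > 0 power budgets. For precoders W_ua, W_ur ∈ ℂ^{N_u×N_s} and relay matrix Ψ ∈ ℂ^{N_r×N_r}, define the effective channel H = [H_ua·W_ua , H_ra·Ψ·H_ur·W_ur] ∈ ℂ^{N_a×2N_s}, the noise covariance J = σ_r²·(H_ra·Ψ)·(H_ra·Ψ)^H + σ_a²·I_{N_a}, and the feasible set S of triples (W_ua, W_ur, Ψ) satisfying ‖W_ua‖_F² ≤ P_ua, ‖W_ur‖_F² ≤ P_ur, and ‖Ψ·H_ur·W_ur‖_F² + σ_r²·‖Ψ‖_F² ≤ P_r. If (W_a*, W_ua*, W_ur*, Ψ*, Z*) globally minimizes the WMMSE objective Re tr(Z·E) − log det Z over all W_a ∈ ℂ^{2N_s×N_a}, Hermitian positive definite Z ∈ ℂ^{2N_s×2N_s}, and (W_ua, W_ur,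 Ψ) ∈ S, where E = (W_a·H − I_{2N_s})·(W_a·H − I_{2N_s})^H + W_a·J·W_a^H, then (W_ua*, W_ur*, Ψ*) globally maximizes the achievable rate R(W_ua, W_ur, Ψ) = log det(I_{2N_s} + H^H·J^{-1}·H) over S. -/
open Matrix
open scoped ComplexOrder

noncomputable section

namespace RACA

variable {Nu Na Nr Ns : ℕ}

/-- Effective channel `H = [H_ua W_ua , H_ra Ψ H_ur W_ur]` of the RACA system. -/
def effChan (Hua : Matrix (Fin Na) (Fin Nu) ℂ) (Hur : Matrix (Fin Nr) (Fin Nu) ℂ)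
    (Hra : Matrix (Fin Na) (Fin Nr) ℂ)
    (Wua Wur : Matrix (Fin Nu) (Fin Ns) ℂ) (Ψ : Matrix (Fin Nr) (Fin Nr) ℂ) :
    Matrix (Fin Na) (Fin Ns ⊕ Fin Ns) ℂ :=
  Matrix.fromCols (Hua * Wua) (Hra * Ψ * Hur * Wur)

/-- Noise covariance `J = σ_r² (H_ra Ψ)(H_ra Ψ)ᴴ + σ_a² I`. -/
def noiseCov (Hra : Matrix (Fin Na) (Fin Nr) ℂ) (Ψ : Matrix (Fin Nr) (Fin Nr) ℂ)
    (σr2 σa2 : ℝ) : Matrix (Fin Na) (Fin Na) ℂ :=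
  (σr2 : ℂ) • ((Hra * Ψ) * (Hra * Ψ)ᴴ) + (σa2 : ℂ) • 1

/-- The feasible set: power constraints at the UE (both bands) and at the relay. -/
def Feasible (Hur : Matrix (Fin Nr) (Fin Nu) ℂ) (σr2 Pua Pur Pr : ℝ)
    (Wua Wur : Matrix (Fin Nu) (Fin Ns) ℂ) (Ψ : Matrix (Fin Nr) (Fin Nr) ℂ) : Prop :=
  ((Wuaᴴ * Wua).trace).re ≤ Pua ∧
  ((Wurᴴ * Wur).trace).re ≤ Pur ∧
  (((Ψ * Hur * Wur)ᴴ * (Ψ * Hur * Wur)).trace).re + σr2 * ((Ψᴴ * Ψ).trace).re ≤ Pr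

/-- Achievable rate `R = log det(I + Hᴴ J⁻¹ H)`. -/
def rate (Hua : Matrix (Fin Na) (Fin Nu) ℂ) (Hur : Matrix (Fin Nr) (Fin Nu) ℂ)
    (Hra : Matrix (Fin Na) (Fin Nr) ℂ) (σr2 σa2 : ℝ)
    (Wua Wur : Matrix (Fin Nu) (Fin Ns) ℂ) (Ψ : Matrix (Fin Nr) (Fin Nr) ℂ) : ℝ :=
  Real.log
    ((((1 : Matrix (Fin Ns ⊕ Fin Ns) (Fin Ns ⊕ Fin Ns) ℂ)
        + (effChan Hua Hur Hra Wua Wur Ψ)ᴴ * (noiseCov Hra Ψ σr2 σa2)⁻¹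
            * effChan Hua Hur Hra Wua Wur Ψ).det).re)

/-- MSE matrix `E = (W_a H − I)(W_a H − I)ᴴ + W_a J W_aᴴ` of a receiver `W_a`. -/
def mseMat (Hua : Matrix (Fin Na) (Fin Nu) ℂ) (Hur : Matrix (Fin Nr) (Fin Nu) ℂ)
    (Hra : Matrix (Fin Na) (Fin Nr) ℂ) (σr2 σa2 : ℝ)
    (Wa : Matrix (Fin Ns ⊕ Fin Ns) (Fin Na) ℂ)
    (Wua Wur : Matrix (Fin Nu) (Fin Ns) ℂ) (Ψ : Matrix (Fin Nr) (Fin Nr) ℂ) :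
    Matrix (Fin Ns ⊕ Fin Ns) (Fin Ns ⊕ Fin Ns) ℂ :=
  (Wa * effChan Hua Hur Hra Wua Wur Ψ - 1)
      * (Wa * effChan Hua Hur Hra Wua Wur Ψ - 1)ᴴ
    + Wa * noiseCov Hra Ψ σr2 σa2 * Waᴴ

/-- WMMSE objective `Re tr(Z E) − log det Z`. -/
def wmmseObj (Hua : Matrix (Fin Na) (Fin Nu) ℂ) (Hur : Matrix (Fin Nr) (Fin Nu) ℂ)
    (Hra : Matrix (Fin Na) (Fin Nr) ℂ) (σr2 σa2 : ℝ)
    (Wa : Matrix (Fin Ns ⊕ Fin Ns) (Fin Na) ℂ)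
    (Wua Wur : Matrix (Fin Nu) (Fin Ns) ℂ) (Ψ : Matrix (Fin Nr) (Fin Nr) ℂ)
    (Z : Matrix (Fin Ns ⊕ Fin Ns) (Fin Ns ⊕ Fin Ns) ℂ) : ℝ :=
  ((Z * mseMat Hua Hur Hra σr2 σa2 Wa Wua Wur Ψ).trace).re - Real.log ((Z.det).re)

section Aux
variable {ι : Type*} [Fintype ι] [DecidableEq ι]

lemma trace_eq_sum_eig {A : Matrix ι ι ℂ} (hA : A.IsHermitian) :
    A.trace = ∑ i, (hA.eigenvalues i : ℂ) := by
  conv_lhs => rw [hA.spectral_theorem]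
  rw [Unitary.conjStarAlgAut_apply, Matrix.trace_mul_cycle]
  have h : star (hA.eigenvectorUnitary : Matrix ι ι ℂ) * (hA.eigenvectorUnitary : Matrix ι ι ℂ)
      = 1 := by simpa using unitary.coe_star_mul_self hA.eigenvectorUnitary
  rw [h, Matrix.one_mul, Matrix.trace_diagonal]
  simp

lemma det_re_posdef {A : Matrix ι ι ℂ} (hA : A.PosDef) :
    0 < (A.det).re ∧ A.det = ((A.det).re : ℂ) := by
  have h := hA.det_pos
  rw [Complex.lt_def] at h
  refine ⟨by simpa using h.1, ?_⟩
  apply Complex.ext <;> simp [← h.2]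

lemma re_trace_eq_sum_eig {A : Matrix ι ι ℂ} (hA : A.IsHermitian) :
    (A.trace).re = ∑ i, hA.eigenvalues i := by
  rw [trace_eq_sum_eig hA, ← Complex.ofReal_sum, Complex.ofReal_re]

lemma re_det_eq_prod_eig {A : Matrix ι ι ℂ} (hA : A.IsHermitian) :
    (A.det).re = ∏ i, hA.eigenvalues i := by
  rw [hA.det_eq_prod_eigenvalues]
  norm_cast

lemma card_add_log_det_le_re_trace {B : Matrix ι ι ℂ} (hB : B.PosDef) :
    (Fintype.card ι : ℝ) + Real.log ((B.det).re) ≤ (B.trace).re := by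
  rw [re_trace_eq_sum_eig hB.isHermitian, re_det_eq_prod_eig hB.isHermitian,
    Real.log_prod (fun i _ => (hB.eigenvalues_pos i).ne')]
  have h : ∀ i ∈ Finset.univ, 1 + Real.log (hB.isHermitian.eigenvalues i)
      ≤ hB.isHermitian.eigenvalues i := fun i _ => by
    have := Real.log_le_sub_one_of_pos (hB.eigenvalues_pos i); linarith
  calc (Fintype.card ι : ℝ) + ∑ i, Real.log (hB.isHermitian.eigenvalues i)
      = ∑ i : ι, (1 + Real.log (hB.isHermitian.eigenvalues i)) := by
        rw [Finset.sum_add_distrib]; simp [Finset.card_univ]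
    _ ≤ ∑ i, hB.isHermitian.eigenvalues i := Finset.sum_le_sum h

lemma re_trace_nonneg_of_posSemidef {B : Matrix ι ι ℂ} (hB : B.PosSemidef) :
    0 ≤ (B.trace).re := by
  rw [re_trace_eq_sum_eig hB.isHermitian]
  exact Finset.sum_nonneg fun i _ => hB.eigenvalues_nonneg i

open scoped MatrixOrder in
lemma re_trace_mul_nonneg {Z P : Matrix ι ι ℂ} (hZ : Z.PosSemidef) (hP : P.PosSemidef) :
    0 ≤ ((Z * P).trace).re := by
  obtain ⟨B, rfl⟩ := CStarAlgebra.nonneg_iff_eq_star_mul_self.mp hP.nonneg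
  rw [← Matrix.mul_assoc, Matrix.trace_mul_cycle]
  exact re_trace_nonneg_of_posSemidef (hZ.mul_mul_conjTranspose_same B)

lemma posdef_herm_conj {M S : Matrix ι ι ℂ} (hM : M.PosDef) (hS : S.IsHermitian)
    (hdet : IsUnit S.det) : (S * M * S).PosDef := by
  have := hM.conjTranspose_mul_mul_same (B := S)
    (Matrix.mulVec_injective_of_isUnit ((Matrix.isUnit_iff_isUnit_det S).mpr hdet))
  rwa [hS.eq] at this

open scoped MatrixOrder in
lemma wmmse_core {Z M : Matrix ι ι ℂ} (hZ : Z.PosDef) (hM : M.PosDef) :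
    (Fintype.card ι : ℝ) + Real.log ((M.det).re)
      ≤ ((Z * M).trace).re - Real.log ((Z.det).re) := by
  set S := CFC.sqrt M with hSdef
  have hS : S.IsHermitian := (Matrix.nonneg_iff_posSemidef.mp (CFC.sqrt_nonneg M)).isHermitian
  have hSS : S * S = M := CFC.sqrt_mul_sqrt_self M hM.posSemidef.nonneg
  have hdetS : IsUnit S.det := by
    have h : S.det * S.det = M.det := by rw [← Matrix.det_mul, hSS]
    have hM0 : M.det ≠ 0 := hM.det_pos.ne'
    refine isUnit_iff_ne_zero.mpr fun h0 => hM0 ?_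
    rw [← h, h0, mul_zero]
  have hB : (S * Z * S).PosDef := posdef_herm_conj hZ hS hdetS
  have h1 := card_add_log_det_le_re_trace hB
  have htr : (S * Z * S).trace = (Z * M).trace := by
    rw [Matrix.trace_mul_cycle, Matrix.trace_mul_comm, hSS]
  have hdet : ((S * Z * S).det).re = (Z.det).re * (M.det).re := by
    have h2 : (S * Z * S).det = Z.det * M.det := by
      rw [Matrix.det_mul, Matrix.det_mul, ← hSS, Matrix.det_mul]; ring
    rw [h2, (det_re_posdef hZ).2, (det_re_posdef hM).2]
    push_cast
    simp
  rw [htr, hdet] at h1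
  rw [Real.log_mul (det_re_posdef hZ).1.ne' (det_re_posdef hM).1.ne'] at h1
  linarith

end Aux

section Core
variable {ι m : Type*} [Fintype ι] [DecidableEq ι] [Fintype m] [DecidableEq m]
variable (H : Matrix m ι ℂ) {J : Matrix m m ℂ}

lemma hK_posdef (hJ : J.PosDef) : (H * Hᴴ + J).PosDef :=
  Matrix.PosDef.posSemidef_add (Matrix.posSemidef_self_mul_conjTranspose H) hJ

lemma key_inv (hJ : J.PosDef) :
    (1 + Hᴴ * J⁻¹ * H) * (1 - Hᴴ * (H * Hᴴ + J)⁻¹ * H) = 1 := by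
  set K := H * Hᴴ + J with hKdef
  have hKd : IsUnit K.det := (hK_posdef H hJ).det_pos.ne'.isUnit
  have hJd : IsUnit J.det := hJ.det_pos.ne'.isUnit
  have h1 : J⁻¹ * (H * Hᴴ) * K⁻¹ = J⁻¹ - K⁻¹ := by
    have hH : H * Hᴴ = K - J := by rw [hKdef, add_sub_cancel_right]
    rw [hH, Matrix.mul_sub, Matrix.sub_mul, Matrix.mul_nonsing_inv_cancel_right _ _ hKd,
      Matrix.nonsing_inv_mul _ hJd, Matrix.one_mul]
  have h2 : (Hᴴ * J⁻¹ * H) * (Hᴴ * K⁻¹ * H) = Hᴴ * J⁻¹ * H - Hᴴ * K⁻¹ * H := by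
    calc (Hᴴ * J⁻¹ * H) * (Hᴴ * K⁻¹ * H)
        = Hᴴ * (J⁻¹ * (H * Hᴴ) * K⁻¹) * H := by simp only [Matrix.mul_assoc]
      _ = Hᴴ * (J⁻¹ - K⁻¹) * H := by rw [h1]
      _ = Hᴴ * J⁻¹ * H - Hᴴ * K⁻¹ * H := by rw [Matrix.mul_sub, Matrix.sub_mul]
  have h3 : (1 + Hᴴ * J⁻¹ * H) * (1 - Hᴴ * K⁻¹ * H)
      = 1 + Hᴴ * J⁻¹ * H - Hᴴ * K⁻¹ * H - (Hᴴ * J⁻¹ * H) * (Hᴴ * K⁻¹ * H) := by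
    noncomm_ring
  rw [h3, h2]
  abel

lemma onePlus_posdef (hJ : J.PosDef) : (1 + Hᴴ * J⁻¹ * H).PosDef :=
  Matrix.PosDef.add_posSemidef Matrix.PosDef.one
    ((hJ.inv.posSemidef).conjTranspose_mul_mul_same H)

lemma E0_eq_inv (hJ : J.PosDef) :
    (1 - Hᴴ * (H * Hᴴ + J)⁻¹ * H) = (1 + Hᴴ * J⁻¹ * H)⁻¹ :=
  (Matrix.inv_eq_right_inv (key_inv H hJ)).symm

lemma E0_posdef' (hJ : J.PosDef) : (1 - Hᴴ * (H * Hᴴ + J)⁻¹ * H).PosDef := by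
  rw [E0_eq_inv H hJ]
  exact (onePlus_posdef H hJ).inv

lemma rate_eq_neg_log (hJ : J.PosDef) :
    Real.log (((1 + Hᴴ * J⁻¹ * H).det).re)
      = - Real.log (((1 - Hᴴ * (H * Hᴴ + J)⁻¹ * H).det).re) := by
  have h := congrArg Matrix.det (key_inv H hJ)
  rw [Matrix.det_mul, Matrix.det_one] at h
  have h1 := det_re_posdef (onePlus_posdef H hJ)
  have h2 := det_re_posdef (E0_posdef' H hJ)
  rw [h1.2, h2.2] at h
  norm_cast at h
  have hlog : Real.log (((1 + Hᴴ * J⁻¹ * H).det).re)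
      + Real.log (((1 - Hᴴ * (H * Hᴴ + J)⁻¹ * H).det).re) = 0 := by
    rw [← Real.log_mul h1.1.ne' h2.1.ne', h, Real.log_one]
  linarith

lemma mse_decomp (hJ : J.PosDef) (Wa : Matrix ι m ℂ) :
    (Wa * H - 1) * (Wa * H - 1)ᴴ + Wa * J * Waᴴ
      = (Wa - Hᴴ * (H * Hᴴ + J)⁻¹) * (H * Hᴴ + J) * (Wa - Hᴴ * (H * Hᴴ + J)⁻¹)ᴴ
        + (1 - Hᴴ * (H * Hᴴ + J)⁻¹ * H) := by
  set K := H * Hᴴ + J with hKdef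
  have hKd : IsUnit K.det := (hK_posdef H hJ).det_pos.ne'.isUnit
  have hKinv : K⁻¹.IsHermitian := ((hK_posdef H hJ).isHermitian).inv
  have h1 : (Wa - Hᴴ * K⁻¹)ᴴ = Waᴴ - K⁻¹ * H := by
    simp [Matrix.conjTranspose_sub, Matrix.conjTranspose_mul, hKinv.eq]
  have h2 : (Wa * H - 1)ᴴ = Hᴴ * Waᴴ - 1 := by
    simp [Matrix.conjTranspose_sub, Matrix.conjTranspose_mul]
  rw [h1, h2]
  have e0 : (Wa - Hᴴ * K⁻¹) * K = Wa * K - Hᴴ := by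
    rw [Matrix.sub_mul, Matrix.nonsing_inv_mul_cancel_right _ _ hKd]
  have e1 : Wa * K * (K⁻¹ * H) = Wa * H := by
    rw [← Matrix.mul_assoc, Matrix.mul_nonsing_inv_cancel_right _ _ hKd]
  have rhs : (Wa * K - Hᴴ) * (Waᴴ - K⁻¹ * H)
      = Wa * K * Waᴴ - Wa * H - Hᴴ * Waᴴ + Hᴴ * K⁻¹ * H := by
    rw [Matrix.sub_mul, Matrix.mul_sub, Matrix.mul_sub, e1, Matrix.mul_assoc]
    simp only [Matrix.mul_assoc, Matrix.one_mul, Matrix.mul_one]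
    abel
  have lhs : (Wa * H - 1) * (Hᴴ * Waᴴ - 1) + Wa * J * Waᴴ
      = Wa * K * Waᴴ - Wa * H - Hᴴ * Waᴴ + 1 := by
    have hJ' : J = K - H * Hᴴ := by rw [hKdef, add_sub_cancel_left]
    rw [Matrix.sub_mul, Matrix.mul_sub, Matrix.mul_sub, Matrix.mul_one, Matrix.one_mul, hJ',
      Matrix.mul_sub, Matrix.sub_mul]
    have : Wa * H * (Hᴴ * Waᴴ) = Wa * (H * Hᴴ) * Waᴴ := by
      simp only [Matrix.mul_assoc]
    rw [this]
    simp only [Matrix.mul_assoc, Matrix.one_mul, Matrix.mul_one]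
    abel
  rw [lhs, e0, rhs]
  abel

lemma lower_bound (hJ : J.PosDef) (Wa : Matrix ι m ℂ) {Z : Matrix ι ι ℂ} (hZ : Z.PosDef) :
    (Fintype.card ι : ℝ) + Real.log (((1 - Hᴴ * (H * Hᴴ + J)⁻¹ * H).det).re)
      ≤ ((Z * ((Wa * H - 1) * (Wa * H - 1)ᴴ + Wa * J * Waᴴ)).trace).re
        - Real.log ((Z.det).re) := by
  rw [mse_decomp H hJ Wa, Matrix.mul_add, Matrix.trace_add]
  have hq : 0 ≤ ((Z * ((Wa - Hᴴ * (H * Hᴴ + J)⁻¹) * (H * Hᴴ + J)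
      * (Wa - Hᴴ * (H * Hᴴ + J)⁻¹)ᴴ)).trace).re :=
    re_trace_mul_nonneg hZ.posSemidef
      ((hK_posdef H hJ).posSemidef.mul_mul_conjTranspose_same _)
  have hcore := wmmse_core hZ (E0_posdef' H hJ)
  simp only [Complex.add_re]
  linarith

lemma witness_bound (hJ : J.PosDef) :
    (((1 - Hᴴ * (H * Hᴴ + J)⁻¹ * H)⁻¹
        * ((Hᴴ * (H * Hᴴ + J)⁻¹ * H - 1) * (Hᴴ * (H * Hᴴ + J)⁻¹ * H - 1)ᴴ
            + Hᴴ * (H * Hᴴ + J)⁻¹ * J * (Hᴴ * (H * Hᴴ + J)⁻¹)ᴴ)).trace).re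
      - Real.log ((((1 - Hᴴ * (H * Hᴴ + J)⁻¹ * H)⁻¹).det).re)
      = (Fintype.card ι : ℝ) + Real.log (((1 - Hᴴ * (H * Hᴴ + J)⁻¹ * H).det).re) := by
  have hmse : (Hᴴ * (H * Hᴴ + J)⁻¹ * H - 1) * (Hᴴ * (H * Hᴴ + J)⁻¹ * H - 1)ᴴ
      + Hᴴ * (H * Hᴴ + J)⁻¹ * J * (Hᴴ * (H * Hᴴ + J)⁻¹)ᴴ
      = 1 - Hᴴ * (H * Hᴴ + J)⁻¹ * H := by
    simpa using mse_decomp H hJ (Hᴴ * (H * Hᴴ + J)⁻¹)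
  rw [hmse]
  have hE0pd := E0_posdef' H hJ
  have hdetU : IsUnit (1 - Hᴴ * (H * Hᴴ + J)⁻¹ * H).det := hE0pd.det_pos.ne'.isUnit
  rw [Matrix.nonsing_inv_mul _ hdetU, Matrix.trace_one, Matrix.det_nonsing_inv,
    Ring.inverse_eq_inv]
  have hinv : (((1 - Hᴴ * (H * Hᴴ + J)⁻¹ * H).det)⁻¹).re
      = ((((1 - Hᴴ * (H * Hᴴ + J)⁻¹ * H).det)).re)⁻¹ := by
    conv_lhs => rw [(det_re_posdef hE0pd).2]
    rw [← Complex.ofReal_inv, Complex.ofReal_re]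
  rw [hinv, Real.log_inv, sub_neg_eq_add]
  norm_num

end Core

section Noise
variable {ι : Type*} [Fintype ι] [DecidableEq ι]

lemma posSemidef_real_smul {c : ℝ} (hc : 0 ≤ c) {M : Matrix ι ι ℂ} (hM : M.PosSemidef) :
    ((c : ℂ) • M).PosSemidef := by
  constructor
  · show ((c : ℂ) • M)ᴴ = _
    simp [Matrix.conjTranspose_smul, hM.1.eq]
  · intro x
    exact (hM.smul (a := (c : ℂ)) (by exact_mod_cast hc)).2 x

lemma posDef_smul_one {c : ℝ} (hc : 0 < c) : ((c : ℂ) • (1 : Matrix ι ι ℂ)).PosDef := by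
  have h : (c : ℂ) • (1 : Matrix ι ι ℂ) = Matrix.diagonal (fun _ => (c : ℂ)) := by
    ext i j
    by_cases h : i = j <;> simp [Matrix.one_apply, Matrix.diagonal_apply, h]
  rw [h]
  exact Matrix.posDef_diagonal_iff.mpr fun i => by exact_mod_cast hc

lemma noiseCov_posdef {Na Nr : ℕ} (Hra : Matrix (Fin Na) (Fin Nr) ℂ)
    (Ψ : Matrix (Fin Nr) (Fin Nr) ℂ) {σr2 σa2 : ℝ} (hr : 0 ≤ σr2) (ha : 0 < σa2) :
    (noiseCov Hra Ψ σr2 σa2).PosDef :=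
  Matrix.PosDef.posSemidef_add
    (posSemidef_real_smul hr (Matrix.posSemidef_self_mul_conjTranspose _))
    (posDef_smul_one ha)

end Noise


/-- **Theorem 1 of the RACA paper.**  A global minimizer
`(W_a*, W_ua*, W_ur*, Ψ*, Z*)` of the WMMSE problem yields a global maximizer
`(W_ua*, W_ur*, Ψ*)` of the rate maximization problem over the feasible set. -/
theorem stmt_0
    (Hua : Matrix (Fin Na) (Fin Nu) ℂ) (Hur : Matrix (Fin Nr) (Fin Nu) ℂ)
    (Hra : Matrix (Fin Na) (Fin Nr) ℂ)
    (σr2 σa2 Pua Pur Pr : ℝ)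
    (hσr2 : 0 < σr2) (hσa2 : 0 < σa2) (hPua : 0 < Pua) (hPur : 0 < Pur) (hPr : 0 < Pr)
    (hNs : Ns ≤ Nu ∧ Ns ≤ Na ∧ Ns ≤ Nr) (hNa : 2 * Ns ≤ Na)
    (Was : Matrix (Fin Ns ⊕ Fin Ns) (Fin Na) ℂ)
    (Wuas Wurs : Matrix (Fin Nu) (Fin Ns) ℂ) (Ψs : Matrix (Fin Nr) (Fin Nr) ℂ)
    (Zs : Matrix (Fin Ns ⊕ Fin Ns) (Fin Ns ⊕ Fin Ns) ℂ)
    (hZs : Zs.PosDef)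
    (hfeas : Feasible Hur σr2 Pua Pur Pr Wuas Wurs Ψs)
    (hmin : ∀ (Wa : Matrix (Fin Ns ⊕ Fin Ns) (Fin Na) ℂ)
        (Wua Wur : Matrix (Fin Nu) (Fin Ns) ℂ) (Ψ : Matrix (Fin Nr) (Fin Nr) ℂ)
        (Z : Matrix (Fin Ns ⊕ Fin Ns) (Fin Ns ⊕ Fin Ns) ℂ),
        Z.PosDef → Feasible Hur σr2 Pua Pur Pr Wua Wur Ψ →
        wmmseObj Hua Hur Hra σr2 σa2 Was Wuas Wurs Ψs Zs
          ≤ wmmseObj Hua Hur Hra σr2 σa2 Wa Wua Wur Ψ Z) :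
    ∀ (Wua Wur : Matrix (Fin Nu) (Fin Ns) ℂ) (Ψ : Matrix (Fin Nr) (Fin Nr) ℂ),
      Feasible Hur σr2 Pua Pur Pr Wua Wur Ψ →
      rate Hua Hur Hra σr2 σa2 Wua Wur Ψ ≤ rate Hua Hur Hra σr2 σa2 Wuas Wurs Ψs := by
  intro Wua Wur Ψ hfp
  have hJp : (noiseCov Hra Ψ σr2 σa2).PosDef := noiseCov_posdef Hra Ψ hσr2.le hσa2
  have hJs : (noiseCov Hra Ψs σr2 σa2).PosDef := noiseCov_posdef Hra Ψs hσr2.le hσa2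
  set Hp := effChan Hua Hur Hra Wua Wur Ψ with hHp
  set Jp := noiseCov Hra Ψ σr2 σa2 with hJpd
  set Hs := effChan Hua Hur Hra Wuas Wurs Ψs with hHs
  set Js := noiseCov Hra Ψs σr2 σa2 with hJsd
  have hlow : (Fintype.card (Fin Ns ⊕ Fin Ns) : ℝ)
      + Real.log (((1 - Hsᴴ * (Hs * Hsᴴ + Js)⁻¹ * Hs).det).re)
      ≤ wmmseObj Hua Hur Hra σr2 σa2 Was Wuas Wurs Ψs Zs := by
    unfold wmmseObj mseMat
    rw [← hHs, ← hJsd]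
    exact lower_bound Hs hJs Was hZs
  have hup : wmmseObj Hua Hur Hra σr2 σa2 Was Wuas Wurs Ψs Zs
      ≤ (Fintype.card (Fin Ns ⊕ Fin Ns) : ℝ)
        + Real.log (((1 - Hpᴴ * (Hp * Hpᴴ + Jp)⁻¹ * Hp).det).re) := by
    have h := hmin (Hpᴴ * (Hp * Hpᴴ + Jp)⁻¹) Wua Wur Ψ
      ((1 - Hpᴴ * (Hp * Hpᴴ + Jp)⁻¹ * Hp)⁻¹) ((E0_posdef' Hp hJp).inv) hfp
    refine h.trans (le_of_eq ?_)
    unfold wmmseObj mseMat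
    rw [← hHp, ← hJpd]
    exact witness_bound Hp hJp
  have hrp : rate Hua Hur Hra σr2 σa2 Wua Wur Ψ
      = - Real.log (((1 - Hpᴴ * (Hp * Hpᴴ + Jp)⁻¹ * Hp).det).re) := by
    unfold rate
    rw [← hHp, ← hJpd]
    exact rate_eq_neg_log Hp hJp
  have hrs : rate Hua Hur Hra σr2 σa2 Wuas Wurs Ψs
      = - Real.log (((1 - Hsᴴ * (Hs * Hsᴴ + Js)⁻¹ * Hs).det).re) := by
    unfold rate
    rw [← hHs, ← hJsd]
    exact rate_eq_neg_log Hs hJs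
  rw [hrp, hrs]
  linarith

end RACA
end
end

section
/- Let H ∈ ℂ^{n×k} and let J ∈ ℂ^{n×n} be Hermitian positive definite. For W ∈ ℂ^{k×n} define the MSE matrix E(W) = (W·H − I_k)·(W·H − I_k)^H + W·J·W^H. Then the infimum over all W ∈ ℂ^{k×n} and all Hermitian positive definite Z ∈ ℂ^{k×k} of Re tr(Z·E(W)) − log det Z equals k − log det(I_k + H^H·J^{-1}·H), and this infimum is attained at W* = H^H·(H·H^H + J)^{-1} together with Z* = (E(W*))^{-1}. -/
open Matrix
open scoped ComplexOrder

noncomputable section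

variable {m : Type*} [Fintype m] [DecidableEq m]

lemma aux_trace_eq_sum {A : Matrix m m ℂ} (hA : A.IsHermitian) :
    A.trace = ∑ i, (hA.eigenvalues i : ℂ) := by
  nth_rewrite 1 [hA.spectral_theorem, Unitary.conjStarAlgAut_apply]
  rw [Matrix.trace_mul_cycle]
  rw [show star (hA.eigenvectorUnitary : Matrix m m ℂ) * (hA.eigenvectorUnitary : Matrix m m ℂ) = 1
    from Unitary.coe_star_mul_self _, Matrix.one_mul, Matrix.trace_diagonal]
  rfl

lemma aux_det_re {A : Matrix m m ℂ} (hA : A.IsHermitian) :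
    A.det = ((∏ i, hA.eigenvalues i : ℝ) : ℂ) := by
  rw [hA.det_eq_prod_eigenvalues]; push_cast; rfl

lemma aux_core {P : Matrix m m ℂ} (hP : P.PosDef) :
    (Fintype.card m : ℝ) + Real.log (P.det.re) ≤ P.trace.re := by
  have hev := hP.eigenvalues_pos
  have hdet : P.det.re = ∏ i, hP.1.eigenvalues i := by
    rw [aux_det_re hP.1, Complex.ofReal_re]
  have htr : P.trace.re = ∑ i, hP.1.eigenvalues i := by
    rw [aux_trace_eq_sum hP.1, Complex.re_sum]
    simp
  rw [hdet, htr, Real.log_prod (fun i _ => (hev i).ne')]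
  rw [← Finset.card_univ, Finset.card_eq_sum_ones, Nat.cast_sum, ← Finset.sum_add_distrib]
  refine Finset.sum_le_sum fun i _ => ?_
  have := Real.log_le_sub_one_of_pos (hev i)
  push_cast
  linarith

lemma aux_psd_trace_re_nonneg {A : Matrix m m ℂ} (hA : A.PosSemidef) :
    0 ≤ A.trace.re := by
  have h : ∀ i, 0 ≤ A i i := fun i => by
    have := hA.dotProduct_mulVec_nonneg (Pi.single i 1)
    simpa [Matrix.mulVec, dotProduct, Pi.single_apply] using this
  rw [Matrix.trace, Complex.re_sum]
  exact Finset.sum_nonneg fun i _ => (Complex.le_def.mp (h i)).1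

lemma aux_trace_mul_nonneg {Z A : Matrix m m ℂ} (hZ : Z.PosSemidef)
    (hA : A.PosSemidef) : 0 ≤ (Z * A).trace.re := by
  open scoped MatrixOrder in
  have hs : (CFC.sqrt Z).PosSemidef := (CFC.sqrt_nonneg Z).posSemidef
  open scoped MatrixOrder in
  have h1 : Z * A = CFC.sqrt Z * (CFC.sqrt Z * A) := by
    rw [← Matrix.mul_assoc, CFC.sqrt_mul_sqrt_self Z hZ.nonneg]
  rw [h1, Matrix.trace_mul_comm]
  have : ((CFC.sqrt Z * A) * CFC.sqrt Z).PosSemidef := by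
    have := hA.mul_mul_conjTranspose_same (CFC.sqrt Z)
    rwa [hs.1.eq] at this
  exact aux_psd_trace_re_nonneg this

lemma aux_posdef_of_det {A : Matrix m m ℂ} (hA : A.PosSemidef) (hd : A.det ≠ 0) :
    A.PosDef := by
  exact hA.posDef_iff_det_ne_zero.mpr hd

lemma aux_det_real {A : Matrix m m ℂ} (hA : A.PosDef) :
    A.det = (A.det.re : ℂ) ∧ 0 < A.det.re := by
  have h := hA.det_pos
  rw [Complex.lt_def] at h
  refine ⟨?_, by simpa using h.1⟩
  apply Complex.ext <;> simp [← h.2]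

/-- The infimum of the WMMSE objective `Re tr(Z E(W)) − log det Z` over all receivers
`W` and Hermitian positive definite weights `Z` equals `k − log det(I + Hᴴ J⁻¹ H)`,
attained at `W* = Hᴴ (H Hᴴ + J)⁻¹` together with `Z* = (E(W*))⁻¹`. -/
theorem stmt_1 {n k : ℕ} (H : Matrix (Fin n) (Fin k) ℂ)
    (J : Matrix (Fin n) (Fin n) ℂ) (hJ : J.PosDef)
    (E : Matrix (Fin k) (Fin n) ℂ → Matrix (Fin k) (Fin k) ℂ)
    (hE : ∀ W, E W = (W * H - 1) * (W * H - 1)ᴴ + W * J * Wᴴ)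
    (obj : Matrix (Fin k) (Fin n) ℂ → Matrix (Fin k) (Fin k) ℂ → ℝ)
    (hobj : ∀ W Z, obj W Z = ((Z * E W).trace).re - Real.log ((Z.det).re))
    (Wstar : Matrix (Fin k) (Fin n) ℂ) (hWstar : Wstar = Hᴴ * (H * Hᴴ + J)⁻¹)
    (Zstar : Matrix (Fin k) (Fin k) ℂ) (hZstar : Zstar = (E Wstar)⁻¹) :
    (∀ (W : Matrix (Fin k) (Fin n) ℂ) (Z : Matrix (Fin k) (Fin k) ℂ), Z.PosDef →
        (k : ℝ) - Real.log ((((1 : Matrix (Fin k) (Fin k) ℂ) + Hᴴ * J⁻¹ * H).det).re)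
          ≤ obj W Z) ∧
    Zstar.PosDef ∧
    obj Wstar Zstar
      = (k : ℝ) - Real.log ((((1 : Matrix (Fin k) (Fin k) ℂ) + Hᴴ * J⁻¹ * H).det).re) := by
  set S : Matrix (Fin n) (Fin n) ℂ := H * Hᴴ + J with hSdef
  have hS : S.PosDef :=
    Matrix.PosDef.posSemidef_add (Matrix.posSemidef_self_mul_conjTranspose H) hJ
  have hSd : IsUnit S.det := isUnit_iff_ne_zero.mpr hS.det_pos.ne'
  have hJd : IsUnit J.det := isUnit_iff_ne_zero.mpr hJ.det_pos.ne'
  set Estar : Matrix (Fin k) (Fin k) ℂ := 1 - Hᴴ * S⁻¹ * H with hEstardef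
  set G : Matrix (Fin k) (Fin k) ℂ := 1 + Hᴴ * J⁻¹ * H with hGdef
  -- cancellation helpers
  have c1 : ∀ (B : Matrix (Fin n) (Fin k) ℂ), S * (S⁻¹ * B) = B :=
    fun B => Matrix.mul_nonsing_inv_cancel_left S B hSd
  have c2 : ∀ (B : Matrix (Fin n) (Fin k) ℂ), S⁻¹ * (S * B) = B :=
    fun B => Matrix.nonsing_inv_mul_cancel_left S B hSd
  have c3 : ∀ (B : Matrix (Fin n) (Fin k) ℂ), J⁻¹ * (J * B) = B :=
    fun B => Matrix.nonsing_inv_mul_cancel_left J B hJd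
  -- expansion of E
  have hEexp : ∀ W, E W = W * (S * Wᴴ) - W * H - Hᴴ * Wᴴ + 1 := by
    intro W
    rw [hE W, hSdef]
    simp only [conjTranspose_sub, conjTranspose_mul, conjTranspose_one,
      Matrix.sub_mul, Matrix.mul_sub, Matrix.add_mul, Matrix.mul_add,
      Matrix.mul_one, Matrix.one_mul, Matrix.mul_assoc]
    abel
  -- decomposition
  have hdecomp : ∀ W, E W = (W - Wstar) * S * (W - Wstar)ᴴ + Estar := by
    intro W
    rw [hEexp W, hWstar, hEstardef]
    have hSinvH : (S⁻¹)ᴴ = S⁻¹ := (hS.inv).1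
    simp only [conjTranspose_sub, conjTranspose_mul, conjTranspose_conjTranspose, hSinvH,
      Matrix.sub_mul, Matrix.mul_sub, Matrix.mul_assoc, c1, c2]
    abel
  -- Woodbury : G * Estar = 1
  have hHH : H * Hᴴ = S - J := by rw [hSdef]; abel
  have key : Hᴴ * (J⁻¹ * (H * (Hᴴ * (S⁻¹ * H))))
      = Hᴴ * (J⁻¹ * H) - Hᴴ * (S⁻¹ * H) := by
    calc Hᴴ * (J⁻¹ * (H * (Hᴴ * (S⁻¹ * H))))
        = Hᴴ * (J⁻¹ * ((H * Hᴴ) * (S⁻¹ * H))) := by simp only [Matrix.mul_assoc]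
      _ = Hᴴ * (J⁻¹ * (S * (S⁻¹ * H)) - J⁻¹ * (J * (S⁻¹ * H))) := by
            rw [hHH, Matrix.sub_mul, Matrix.mul_sub]
      _ = Hᴴ * (J⁻¹ * H - S⁻¹ * H) := by rw [c1, c3]
      _ = Hᴴ * (J⁻¹ * H) - Hᴴ * (S⁻¹ * H) := by rw [Matrix.mul_sub]
  have hwood : G * Estar = 1 := by
    rw [hGdef, hEstardef]
    simp only [Matrix.add_mul, Matrix.mul_sub, Matrix.sub_mul, Matrix.one_mul,
      Matrix.mul_one, Matrix.mul_assoc, key]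
    abel
  have hGpos : G.PosDef :=
    Matrix.PosDef.add_posSemidef Matrix.PosDef.one
      ((hJ.inv.posSemidef).conjTranspose_mul_mul_same H)
  have hEstarEq : Estar = G⁻¹ := (Matrix.inv_eq_right_inv hwood).symm
  have hEstarPos : Estar.PosDef := by rw [hEstarEq]; exact hGpos.inv
  have hEWstar : E Wstar = Estar := by
    rw [hdecomp Wstar]
    simp
  have hZstarPos : Zstar.PosDef := by
    rw [hZstar, hEWstar]; exact hEstarPos.inv
  -- determinant facts
  obtain ⟨hGre, hGpos'⟩ := aux_det_real hGpos
  obtain ⟨hEre, hEpos'⟩ := aux_det_real hEstarPos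
  have hab : G.det * Estar.det = 1 := by rw [← Matrix.det_mul, hwood, Matrix.det_one]
  have habre : G.det.re * Estar.det.re = 1 := by
    have := congrArg Complex.re hab
    rw [hGre, hEre, ← Complex.ofReal_mul] at this
    simpa using this
  have hEdetre : Estar.det.re = (G.det.re)⁻¹ := by
    field_simp at habre ⊢
    linarith
  have hlogE : Real.log (Estar.det.re) = - Real.log (G.det.re) := by
    rw [hEdetre, Real.log_inv]
  constructor
  · -- lower bound
    intro W Z hZ
    obtain ⟨hZre, hZpos'⟩ := aux_det_real hZ
    rw [hobj]
    open scoped MatrixOrder in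
    set R := CFC.sqrt Estar with hRdef
    open scoped MatrixOrder in
    have hR : R.PosSemidef := (CFC.sqrt_nonneg Estar).posSemidef
    open scoped MatrixOrder in
    have hRR : R * R = Estar := CFC.sqrt_mul_sqrt_self Estar hEstarPos.posSemidef.nonneg
    set P : Matrix (Fin k) (Fin k) ℂ := R * Z * R with hPdef
    have hPsd : P.PosSemidef := by
      have := hZ.posSemidef.mul_mul_conjTranspose_same R
      rwa [hR.1.eq] at this
    have hPdet : P.det = Estar.det * Z.det := by
      rw [hPdef, Matrix.det_mul, Matrix.det_mul, ← hRR, Matrix.det_mul]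
      ring
    have hPpos : P.PosDef := by
      refine aux_posdef_of_det hPsd ?_
      rw [hPdet]
      exact mul_ne_zero hEstarPos.det_pos.ne' hZ.det_pos.ne'
    have hEim : Estar.det.im = 0 := by rw [hEre]; simp
    have hZim : Z.det.im = 0 := by rw [hZre]; simp
    have hPdetre : P.det.re = Estar.det.re * Z.det.re := by
      rw [hPdet, Complex.mul_re, hEim, hZim]
      ring
    have htrP : (Z * Estar).trace = P.trace := by
      rw [← hRR, ← Matrix.mul_assoc, Matrix.trace_mul_comm, ← Matrix.mul_assoc]
    -- split trace
    have hsplit : (Z * E W).trace.re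
        = (Z * ((W - Wstar) * S * (W - Wstar)ᴴ)).trace.re + (Z * Estar).trace.re := by
      rw [hdecomp W, Matrix.mul_add, Matrix.trace_add, Complex.add_re]
    have hQ : ((W - Wstar) * S * (W - Wstar)ᴴ).PosSemidef :=
      hS.posSemidef.mul_mul_conjTranspose_same (W - Wstar)
    have h1 : 0 ≤ (Z * ((W - Wstar) * S * (W - Wstar)ᴴ)).trace.re :=
      aux_trace_mul_nonneg hZ.posSemidef hQ
    have hcore := aux_core hPpos
    rw [Fintype.card_fin] at hcore
    have hlogP : Real.log (P.det.re) = Real.log (Estar.det.re) + Real.log (Z.det.re) := by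
      rw [hPdetre, Real.log_mul hEpos'.ne' hZpos'.ne']
    rw [hsplit]
    have h2 : (Z * Estar).trace.re = P.trace.re := by rw [htrP]
    rw [hlogP, hlogE] at hcore
    linarith
  refine ⟨hZstarPos, ?_⟩
  -- value at the optimum
  have hEd : IsUnit (E Wstar).det := by
    rw [hEWstar]; exact isUnit_iff_ne_zero.mpr hEstarPos.det_pos.ne'
  have hinv : Zstar * E Wstar = 1 := by
    rw [hZstar]; exact Matrix.nonsing_inv_mul _ hEd
  have hZdet : Zstar.det.re = G.det.re := by
    rw [hZstar, hEWstar, Matrix.det_nonsing_inv, Ring.inverse_eq_inv', hEre,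
      ← Complex.ofReal_inv, Complex.ofReal_re, hEdetre, inv_inv]
  rw [hobj, hinv, hZdet]
  simp
end
end

section
/- Let a > 0 and b > 0 be real numbers. Then the function g(t) = log(1 + a·b·t / (1 + a + b·t)), defined for t ≥ 0, is concave on [0, ∞); equivalently, since 1 + a·b·t/(1 + a + b·t) = (1 + a)(1 + b·t)/(1 + a + b·t), the function g(t) = log(1 + a) + log(1 + b·t) − log(1 + a + b·t) is concave on [0, ∞). -/
noncomputable section

/-- Concavity of the per-sub-channel relay-link rate: for `a, b > 0`, the function
`t ↦ log(1 + a b t / (1 + a + b t))` is concave on `[0, ∞)`; equivalently, the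
function `t ↦ log(1 + a) + log(1 + b t) − log(1 + a + b t)` is concave on `[0, ∞)`. -/
theorem stmt_12 (a b : ℝ) (ha : 0 < a) (hb : 0 < b) :
    ConcaveOn ℝ (Set.Ici (0 : ℝ))
      (fun t => Real.log (1 + a * b * t / (1 + a + b * t))) ∧
    ConcaveOn ℝ (Set.Ici (0 : ℝ))
      (fun t => Real.log (1 + a) + Real.log (1 + b * t) - Real.log (1 + a + b * t)) := by
  have hp1 : ∀ t : ℝ, t ∈ Set.Ici (0:ℝ) → 0 < 1 + b * t := fun t ht => by
    have : 0 ≤ b * t := mul_nonneg hb.le ht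
    linarith
  have hp2 : ∀ t : ℝ, t ∈ Set.Ici (0:ℝ) → 0 < 1 + a + b * t := fun t ht => by
    have : 0 ≤ b * t := mul_nonneg hb.le ht
    linarith
  have hconc : ConcaveOn ℝ (Set.Ici (0 : ℝ))
      (fun t => Real.log (1 + a) + Real.log (1 + b * t) - Real.log (1 + a + b * t)) := by
    apply concaveOn_of_hasDerivWithinAt2_nonpos (f' := fun t => b * (1 + b * t)⁻¹ - b * (1 + a + b * t)⁻¹)
      (f'' := fun t => b * (-b / (1 + b * t)^2) - b * (-b / (1 + a + b * t)^2))
      (convex_Ici 0)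
    · apply ContinuousOn.sub
      · apply ContinuousOn.add continuousOn_const
        apply ContinuousOn.log
        · fun_prop
        · exact fun t ht => (hp1 t ht).ne'
      · apply ContinuousOn.log
        · fun_prop
        · exact fun t ht => (hp2 t ht).ne'
    · intro x hx
      rw [interior_Ici] at hx
      have h1 : HasDerivAt (fun t : ℝ => 1 + b * t) b x := by
        simpa using ((hasDerivAt_id x).const_mul b).const_add 1
      have h2 : HasDerivAt (fun t : ℝ => 1 + a + b * t) b x := by
        simpa using ((hasDerivAt_id x).const_mul b).const_add (1 + a)
      have hx0 : (0:ℝ) ≤ x := le_of_lt hx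
      have hl1 := h1.log (hp1 x hx0).ne'
      have hl2 := h2.log (hp2 x hx0).ne'
      have := (hl1.const_add (Real.log (1 + a))).sub hl2
      apply HasDerivAt.hasDerivWithinAt
      convert this using 1
      · rfl
      · ring
    · intro x hx
      rw [interior_Ici] at hx
      have hx0 : (0:ℝ) ≤ x := le_of_lt hx
      have h1 : HasDerivAt (fun t : ℝ => 1 + b * t) b x := by
        simpa using ((hasDerivAt_id x).const_mul b).const_add 1
      have h2 : HasDerivAt (fun t : ℝ => 1 + a + b * t) b x := by
        simpa using ((hasDerivAt_id x).const_mul b).const_add (1 + a)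
      have hi1 := (h1.inv (hp1 x hx0).ne').const_mul b
      have hi2 := (h2.inv (hp2 x hx0).ne').const_mul b
      apply HasDerivAt.hasDerivWithinAt
      convert hi1.sub hi2 using 1
      rfl
    · intro x hx
      rw [interior_Ici] at hx
      have hx0 : (0:ℝ) ≤ x := le_of_lt hx
      have h1 := hp1 x hx0
      have h2 := hp2 x hx0
      have hle : (1 + b * x)^2 ≤ (1 + a + b * x)^2 := by nlinarith
      have : b / (1 + a + b * x)^2 ≤ b / (1 + b * x)^2 :=
        div_le_div_of_nonneg_left hb.le (by positivity) hle
      have e : b * (-b / (1 + b * x)^2) - b * (-b / (1 + a + b * x)^2)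
          = b * (b / (1 + a + b * x)^2 - b / (1 + b * x)^2) := by ring
      rw [e]
      apply mul_nonpos_of_nonneg_of_nonpos hb.le
      linarith
  refine ⟨hconc.congr fun t ht => ?_, hconc⟩
  have h1 := hp1 t ht
  have h2 := hp2 t ht
  have key : 1 + a * b * t / (1 + a + b * t) = (1 + a) * (1 + b * t) / (1 + a + b * t) := by
    field_simp
    ring
  simp only [key]
  rw [Real.log_div (by positivity) h2.ne', Real.log_mul (by positivity) h1.ne']
end
end

section
/- Let n ≥ 1, let a_1, …, a_n > 0 and b_1, …, b_n > 0 be real numbers, let P > 0 and ν > 0. Define p*_i = (1/b_i)·max(0, (a_i/2)·(√(1 + 4·b_i/(a_i·ν)) − 1) − 1) for each i, and assume Σ_{i=1}^{n} p*_i = P. Then for every p_1, …, p_n with p_i ≥ 0 and Σ_{i=1}^{n} p_i ≤ P, one has Σ_{i=1}^{n} log(1 + a_i·b_i·p_i/(1 + a_i + b_i·p_i)) ≤ Σ_{i=1}^{n} log(1 + a_i·b_i·p*_i/(1 + a_i + b_i·p*_i)); that is, p* globally maximizes the relay-link sub-problem objective subject to p_i ≥ 0 and Σ_i p_i ≤ P.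 -/
noncomputable section

/-- "Concavity-free" per-coordinate upper bound:
`log g(t) ≤ log g(s) + g'(s)(t-s)` where `g(t) = 1 + abt/(1+a+bt)`. -/
lemma stepA (a b : ℝ) (ha : 0 < a) (hb : 0 < b) (s t : ℝ) (hs : 0 ≤ s) (ht : 0 ≤ t) :
    Real.log (1 + a*b*t/(1+a+b*t)) ≤
      Real.log (1 + a*b*s/(1+a+b*s)) + a*b*(t-s)/((1+b*s)*(1+a+b*s)) := by
  have hdt : (0:ℝ) < 1+a+b*t := by nlinarith [mul_nonneg hb.le ht]
  have hds : (0:ℝ) < 1+a+b*s := by nlinarith [mul_nonneg hb.le hs]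
  have hbs : (0:ℝ) < 1+b*s := by nlinarith [mul_nonneg hb.le hs]
  have hbt : (0:ℝ) < 1+b*t := by nlinarith [mul_nonneg hb.le ht]
  have hgt : (0:ℝ) < 1 + a*b*t/(1+a+b*t) := by
    have : 0 ≤ a*b*t/(1+a+b*t) := by positivity
    linarith
  have hgs : (0:ℝ) < 1 + a*b*s/(1+a+b*s) := by
    have : 0 ≤ a*b*s/(1+a+b*s) := by positivity
    linarith
  have hlog : Real.log (1 + a*b*t/(1+a+b*t)) - Real.log (1 + a*b*s/(1+a+b*s))
      ≤ (1 + a*b*t/(1+a+b*t)) / (1 + a*b*s/(1+a+b*s)) - 1 := by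
    rw [← Real.log_div (ne_of_gt hgt) (ne_of_gt hgs)]
    exact Real.log_le_sub_one_of_pos (by positivity)
  have hq : (1 + a*b*t/(1+a+b*t)) / (1 + a*b*s/(1+a+b*s)) - 1
      = a*b*(t-s)/((1+a+b*t)*(1+b*s)) := by
    rw [div_sub_one (ne_of_gt hgs)]
    rw [div_eq_div_iff (by positivity) (by positivity)]
    field_simp
    ring
  have hmono : a*b*(t-s)/((1+a+b*t)*(1+b*s)) ≤ a*b*(t-s)/((1+b*s)*(1+a+b*s)) := by
    rw [div_le_div_iff₀ (by positivity) (by positivity)]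
    nlinarith [sq_nonneg (t-s), mul_pos ha hb, mul_pos hbs hb,
      mul_nonneg (mul_nonneg (mul_pos ha hb).le hbs.le) (mul_nonneg hb.le (sq_nonneg (t-s)))]
  linarith [hlog, hq ▸ hlog]

/-- Per-coordinate KKT inequality. -/
lemma key_ineq (a b ν : ℝ) (ha : 0 < a) (hb : 0 < b) (hν : 0 < ν)
    (t : ℝ) (ht : 0 ≤ t) :
    Real.log (1 + a*b*t/(1+a+b*t)) ≤
      Real.log (1 + a*b*((1 / b) * max 0 ((a / 2) * (Real.sqrt (1 + 4 * b / (a * ν)) - 1) - 1))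
        /(1+a+b*((1 / b) * max 0 ((a / 2) * (Real.sqrt (1 + 4 * b / (a * ν)) - 1) - 1))))
      + ν*(t - ((1 / b) * max 0 ((a / 2) * (Real.sqrt (1 + 4 * b / (a * ν)) - 1) - 1))) := by
  set r := Real.sqrt (1 + 4 * b / (a * ν)) with hr
  have hrad : (0:ℝ) ≤ 1 + 4 * b / (a * ν) := by positivity
  have hr2 : r^2 = 1 + 4 * b / (a * ν) := Real.sq_sqrt hrad
  have hr1 : 1 ≤ r := by
    rw [hr]
    have : (1:ℝ) = Real.sqrt 1 := (Real.sqrt_one).symm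
    rw [this]
    apply Real.sqrt_le_sqrt
    have : 0 ≤ 4 * b / (a * ν) := by positivity
    linarith
  set X := (a / 2) * (r - 1) with hX
  have hXnn : 0 ≤ X := by
    apply mul_nonneg (by positivity)
    linarith
  -- key algebraic identity: X^2 + a*X = a*b/ν
  have hXeq : X^2 + a*X = a*b/ν := by
    have hane : (a:ℝ) ≠ 0 := ne_of_gt ha
    have hνne : (ν:ℝ) ≠ 0 := ne_of_gt hν
    have h4 : r^2 - 1 = 4 * b / (a * ν) := by linarith [hr2]
    have : X^2 + a*X = (a^2/4) * (r^2 - 1) := by rw [hX]; ring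
    rw [this, h4]
    field_simp
  set s := (1 / b) * max 0 (X - 1) with hsdef
  have hs0 : 0 ≤ s := by
    apply mul_nonneg (by positivity)
    exact le_max_left _ _
  have hA := stepA a b ha hb s t hs0 ht
  -- it suffices to bound the slope term
  have hslope : a*b*(t-s)/((1+b*s)*(1+a+b*s)) ≤ ν*(t-s) := by
    rcases le_or_gt (X - 1) 0 with hc | hc
    · -- s = 0 case
      have hsz : s = 0 := by
        rw [hsdef, max_eq_left hc, mul_zero]
      -- a*b ≤ ν*(1+a) since a*b/ν = X^2+aX ≤ 1+a
      have hX1 : X ≤ 1 := by linarith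
      have habν : a*b ≤ ν*(1+a) := by
        have h1 : a*b/ν ≤ 1 + a := by
          rw [← hXeq]; nlinarith
        have := (div_le_iff₀ hν).mp h1
        linarith
      rw [hsz]
      simp only [mul_zero, add_zero, sub_zero]
      rw [div_le_iff₀ (by positivity)]
      nlinarith [mul_nonneg hν.le ht, mul_nonneg (mul_nonneg hν.le ht) ha.le]
    · -- s > 0 case: exact equality of slopes
      have hsx : b * s = X - 1 := by
        rw [hsdef, max_eq_right hc.le]
        field_simp
      have h1bs : 1 + b*s = X := by linarith
      have habs : 1 + a + b*s = X + a := by linarith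
      have hXpos : 0 < X := by linarith
      have hden : (1+b*s)*(1+a+b*s) = a*b/ν := by
        rw [h1bs, habs, ← hXeq]; ring
      rw [hden]
      have hab : (0:ℝ) < a*b := mul_pos ha hb
      have : a*b*(t-s)/(a*b/ν) = ν*(t-s) := by
        field_simp
      rw [this]
  calc Real.log (1 + a*b*t/(1+a+b*t))
      ≤ Real.log (1 + a*b*s/(1+a+b*s)) + a*b*(t-s)/((1+b*s)*(1+a+b*s)) := hA
    _ ≤ Real.log (1 + a*b*s/(1+a+b*s)) + ν*(t-s) := by linarith

/-- Global optimality of the KKT water-filling-type solution of the relay-link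
power-allocation sub-problem: if
`p*_i = (1/b_i) max(0, (a_i/2)(√(1 + 4 b_i/(a_i ν)) − 1) − 1)` with `Σ_i p*_i = P`,
then every feasible allocation `p` satisfies
`Σ_i log(1 + a_i b_i p_i/(1 + a_i + b_i p_i)) ≤ Σ_i log(1 + a_i b_i p*_i/(1 + a_i + b_i p*_i))`. -/
theorem stmt_14 {n : ℕ} (hn : 1 ≤ n)
    (a b : Fin n → ℝ) (ha : ∀ i, 0 < a i) (hb : ∀ i, 0 < b i)
    (P : ℝ) (hP : 0 < P) (ν : ℝ) (hν : 0 < ν)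
    (pstar : Fin n → ℝ)
    (hpstar : ∀ i, pstar i
      = (1 / b i) * max 0 ((a i / 2) * (Real.sqrt (1 + 4 * b i / (a i * ν)) - 1) - 1))
    (hsum : ∑ i : Fin n, pstar i = P) :
    ∀ p : Fin n → ℝ, (∀ i, 0 ≤ p i) → (∑ i : Fin n, p i) ≤ P →
      ∑ i : Fin n, Real.log (1 + a i * b i * p i / (1 + a i + b i * p i))
        ≤ ∑ i : Fin n, Real.log (1 + a i * b i * pstar i / (1 + a i + b i * pstar i)) := by
  intro p hp hpsum
  have hkey : ∀ i, Real.log (1 + a i * b i * p i / (1 + a i + b i * p i))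
      ≤ Real.log (1 + a i * b i * pstar i / (1 + a i + b i * pstar i)) + ν * (p i - pstar i) := by
    intro i
    have := key_ineq (a i) (b i) ν (ha i) (hb i) hν (p i) (hp i)
    rw [hpstar i]
    exact this
  calc ∑ i : Fin n, Real.log (1 + a i * b i * p i / (1 + a i + b i * p i))
      ≤ ∑ i : Fin n, (Real.log (1 + a i * b i * pstar i / (1 + a i + b i * pstar i))
          + ν * (p i - pstar i)) := Finset.sum_le_sum (fun i _ => hkey i)
    _ = (∑ i : Fin n, Real.log (1 + a i * b i * pstar i / (1 + a i + b i * pstar i)))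
          + ν * ((∑ i : Fin n, p i) - ∑ i : Fin n, pstar i) := by
        rw [Finset.sum_add_distrib, ← Finset.sum_sub_distrib, Finset.mul_sum]
    _ ≤ ∑ i : Fin n, Real.log (1 + a i * b i * pstar i / (1 + a i + b i * pstar i)) := by
        have : (∑ i : Fin n, p i) - ∑ i : Fin n, pstar i ≤ 0 := by rw [hsum]; linarith
        nlinarith [mul_nonpos_of_nonneg_of_nonpos hν.le this]
end
end

section
/- Let N_u, N_r, N_a, N_s be positive integers with N_s ≤ min{N_u, N_r, N_a}, and let σ_r², σ_a² > 0. Let H_ur ∈ ℂ^{N_r×N_u} and H_ra ∈ ℂ^{N_a×N_r} admit singular value decompositions H_ur = U_ur·Λ_ur·V_ur^H and H_ra = U_ra·Λ_ra·V_ra^H, with U_ur, V_ur, U_ra, V_ra unitary and Λ_ur, Λ_ra rectangular diagonal with nonnegative real diagonal entries λ_{ur,i} and λ_{ra,i}. Let Ṽ_ur ∈ ℂ^{N_u×N_s}, Ũ_ur ∈ ℂ^{N_r×N_s}, Ṽ_ra ∈ ℂ^{N_r×N_s} consist of the first N_s columns of V_ur, U_ur, V_ra respectively. Given p_{u,1},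 …, p_{u,N_s} ≥ 0 and p_{Ψ,1}, …, p_{Ψ,N_s} ≥ 0, set W = Ṽ_ur·D_u and Ψ = Ṽ_ra·D_Ψ·Ũ_ur^H, where D_u, D_Ψ are diagonal with entries √p_{u,i}, √p_{Ψ,i}. Define H̃ = H_ra·Ψ·H_ur·W ∈ ℂ^{N_a×N_s} and J = σ_r²·(H_ra·Ψ)·(H_ra·Ψ)^H + σ_a²·I_{N_a}. Then log det(I_{N_s} + H̃^H·J^{-1}·H̃) = Σ_{i=1}^{N_s} log(1 + λ_{ra,i}²·p_{Ψ,i}·λ_{ur,i}²·p_{u,i} / (σ_r²·λ_{ra,i}²·p_{Ψ,i} + σ_a²)). -/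
open Matrix
open scoped ComplexOrder

noncomputable section

namespace Stmt17Aux

lemma mulSubId {l m n o : Type*} [Fintype m] (A : Matrix l m ℂ) (B : Matrix m n ℂ) (e : o → n) :
    A * B.submatrix id e = (A * B).submatrix id e := by
  ext i j
  simp [Matrix.mul_apply]

lemma subIdMul {l m n o : Type*} [Fintype m] (A : Matrix l m ℂ) (B : Matrix m n ℂ) (e : o → l) :
    A.submatrix e id * B = (A * B).submatrix e id := by
  ext i j
  simp [Matrix.mul_apply]

lemma key_sum {Na Ns : ℕ} (hNsNa : Ns ≤ Na) (f : Fin Na → ℂ) (i : Fin Ns) :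
    (∑ k : Fin Na, if (k:ℕ) = (i:ℕ) then f k else 0) = f (Fin.castLE hNsNa i) := by
  rw [Finset.sum_eq_single (Fin.castLE hNsNa i)]
  · simp
  · intro k _ hk
    rw [if_neg]
    intro h
    exact hk (Fin.ext (by simpa using h))
  · simp

lemma key_sum2 {Ns : ℕ} {X : ℕ} (f : Fin Ns → ℂ) (i : Fin X) (h : (i:ℕ) < Ns) :
    (∑ k : Fin Ns, if (i:ℕ) = (k:ℕ) then f k else 0) = f ⟨(i:ℕ), h⟩ := by
  rw [Finset.sum_eq_single (⟨(i:ℕ), h⟩ : Fin Ns)]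
  · simp
  · intro k _ hk
    rw [if_neg]
    intro hik
    exact hk (Fin.ext (by simpa using hik.symm))
  · simp

lemma key_sum2' {Ns : ℕ} {X : ℕ} (f : Fin Ns → ℂ) (i : Fin X) (h : ¬ (i:ℕ) < Ns) :
    (∑ k : Fin Ns, if (i:ℕ) = (k:ℕ) then f k else 0) = 0 := by
  apply Finset.sum_eq_zero
  intro k _
  rw [if_neg]
  intro hik
  exact h (hik ▸ k.isLt)

end Stmt17Aux

set_option maxHeartbeats 1000000 in
/-- Joint diagonalization of the two-hop relay link: with SVDs
`H_ur = U_ur Λ_ur V_urᴴ` and `H_ra = U_ra Λ_ra V_raᴴ`, the SVD-aligned precoder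
`W = Ṽ_ur D_u` and relay amplifying matrix `Ψ = Ṽ_ra D_Ψ Ũ_urᴴ` decompose the
relay-link rate into parallel SISO sub-channels:
`log det(I + H̃ᴴ J⁻¹ H̃) = Σ_i log(1 + λ_ra,i² p_Ψ,i λ_ur,i² p_u,i / (σ_r² λ_ra,i² p_Ψ,i + σ_a²))`. -/
theorem stmt_17 {Nu Nr Na Ns : ℕ}
    (hNu : 0 < Nu) (hNr : 0 < Nr) (hNa : 0 < Na) (hNs : 0 < Ns)
    (hNsNu : Ns ≤ Nu) (hNsNr : Ns ≤ Nr) (hNsNa : Ns ≤ Na)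
    (σr2 σa2 : ℝ) (hσr2 : 0 < σr2) (hσa2 : 0 < σa2)
    (Uur : Matrix (Fin Nr) (Fin Nr) ℂ) (hUur : Uur ∈ Matrix.unitaryGroup (Fin Nr) ℂ)
    (Vur : Matrix (Fin Nu) (Fin Nu) ℂ) (hVur : Vur ∈ Matrix.unitaryGroup (Fin Nu) ℂ)
    (Ura : Matrix (Fin Na) (Fin Na) ℂ) (hUra : Ura ∈ Matrix.unitaryGroup (Fin Na) ℂ)
    (Vra : Matrix (Fin Nr) (Fin Nr) ℂ) (hVra : Vra ∈ Matrix.unitaryGroup (Fin Nr) ℂ)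
    (lamur lamra : ℕ → ℝ)
    (hlamur : ∀ i, i < min Nu Nr → 0 ≤ lamur i)
    (hlamra : ∀ i, i < min Nr Na → 0 ≤ lamra i)
    (Λur : Matrix (Fin Nr) (Fin Nu) ℂ)
    (hΛur : ∀ (i : Fin Nr) (j : Fin Nu),
        Λur i j = if (i : ℕ) = (j : ℕ) then (lamur (i : ℕ) : ℂ) else 0)
    (Λra : Matrix (Fin Na) (Fin Nr) ℂ)
    (hΛra : ∀ (i : Fin Na) (j : Fin Nr),
        Λra i j = if (i : ℕ) = (j : ℕ) then (lamra (i : ℕ) : ℂ) else 0)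
    (Hur : Matrix (Fin Nr) (Fin Nu) ℂ) (hHur : Hur = Uur * Λur * Vurᴴ)
    (Hra : Matrix (Fin Na) (Fin Nr) ℂ) (hHra : Hra = Ura * Λra * Vraᴴ)
    (pu pΨ : Fin Ns → ℝ) (hpu : ∀ i, 0 ≤ pu i) (hpΨ : ∀ i, 0 ≤ pΨ i)
    (Vurtil : Matrix (Fin Nu) (Fin Ns) ℂ)
    (hVurtil : Vurtil = Vur.submatrix id (Fin.castLE hNsNu))
    (Uurtil : Matrix (Fin Nr) (Fin Ns) ℂ)
    (hUurtil : Uurtil = Uur.submatrix id (Fin.castLE hNsNr))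
    (Vratil : Matrix (Fin Nr) (Fin Ns) ℂ)
    (hVratil : Vratil = Vra.submatrix id (Fin.castLE hNsNr))
    (W : Matrix (Fin Nu) (Fin Ns) ℂ)
    (hW : W = Vurtil * Matrix.diagonal (fun i => (Real.sqrt (pu i) : ℂ)))
    (Ψ : Matrix (Fin Nr) (Fin Nr) ℂ)
    (hΨ : Ψ = Vratil * Matrix.diagonal (fun i => (Real.sqrt (pΨ i) : ℂ)) * Uurtilᴴ)
    (Htil : Matrix (Fin Na) (Fin Ns) ℂ) (hHtil : Htil = Hra * Ψ * Hur * W)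
    (J : Matrix (Fin Na) (Fin Na) ℂ)
    (hJ : J = (σr2 : ℂ) • ((Hra * Ψ) * (Hra * Ψ)ᴴ) + (σa2 : ℂ) • 1) :
    Real.log ((((1 : Matrix (Fin Ns) (Fin Ns) ℂ) + Htilᴴ * J⁻¹ * Htil).det).re)
      = ∑ i : Fin Ns,
          Real.log (1 + lamra (i : ℕ) ^ 2 * pΨ i * lamur (i : ℕ) ^ 2 * pu i
            / (σr2 * lamra (i : ℕ) ^ 2 * pΨ i + σa2)) := by
  -- abbreviations
  set er : Fin Ns → Fin Nr := Fin.castLE hNsNr with her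
  set eu : Fin Ns → Fin Nu := Fin.castLE hNsNu with heu
  set ea : Fin Ns → Fin Na := Fin.castLE hNsNa with hea
  set DΨ : Matrix (Fin Ns) (Fin Ns) ℂ :=
    Matrix.diagonal (fun i => (Real.sqrt (pΨ i) : ℂ)) with hDΨ
  set Du : Matrix (Fin Ns) (Fin Ns) ℂ :=
    Matrix.diagonal (fun i => (Real.sqrt (pu i) : ℂ)) with hDu
  set B : Matrix (Fin Na) (Fin Ns) ℂ :=
    Matrix.of (fun i j => if (i:ℕ) = (j:ℕ)
      then ((lamra (i:ℕ) * Real.sqrt (pΨ j) : ℝ) : ℂ) else 0) with hBdef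
  set C : Matrix (Fin Ns) (Fin Ns) ℂ :=
    Matrix.diagonal (fun i => ((lamur (i:ℕ) * Real.sqrt (pu i) : ℝ) : ℂ)) with hCdef
  set F : Matrix (Fin Na) (Fin Ns) ℂ :=
    Matrix.of (fun i j => if (i:ℕ) = (j:ℕ)
      then ((lamra (i:ℕ) * Real.sqrt (pΨ j) * (lamur (j:ℕ) * Real.sqrt (pu j)) : ℝ) : ℂ) else 0)
    with hFdef
  set g : Fin Na → ℝ :=
    (fun i => if h : (i:ℕ) < Ns then lamra (i:ℕ) ^ 2 * pΨ ⟨(i:ℕ), h⟩ else 0) with hgdef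
  set d : Fin Na → ℝ := (fun i => σr2 * g i + σa2) with hddef
  set x : Fin Ns → ℝ :=
    (fun i => (lamra (i:ℕ) * Real.sqrt (pΨ i) * (lamur (i:ℕ) * Real.sqrt (pu i))) ^ 2
      * (d (ea i))⁻¹) with hxdef
  -- unitarity
  have hVra1 : Vraᴴ * Vra = 1 := by
    simpa [Matrix.star_eq_conjTranspose] using (Unitary.mem_iff.mp hVra).1
  have hUur1 : Uurᴴ * Uur = 1 := by
    simpa [Matrix.star_eq_conjTranspose] using (Unitary.mem_iff.mp hUur).1
  have hVur1 : Vurᴴ * Vur = 1 := by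
    simpa [Matrix.star_eq_conjTranspose] using (Unitary.mem_iff.mp hVur).1
  have hUra1 : Uraᴴ * Ura = 1 := by
    simpa [Matrix.star_eq_conjTranspose] using (Unitary.mem_iff.mp hUra).1
  have hUra2 : Ura * Uraᴴ = 1 := by
    simpa [Matrix.star_eq_conjTranspose] using (Unitary.mem_iff.mp hUra).2
  -- positivity of d
  have hgnn : ∀ i, 0 ≤ g i := by
    intro i
    rw [hgdef]
    dsimp only
    split_ifs with h
    · exact mul_nonneg (sq_nonneg _) (hpΨ _)
    · exact le_rfl
  have hdpos : ∀ i, 0 < d i := by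
    intro i
    have := hgnn i
    rw [hddef]
    dsimp only
    nlinarith [mul_nonneg hσr2.le (hgnn i)]
  -- step 1 : Vraᴴ * Vratil
  have h1 : Vraᴴ * Vratil = (1 : Matrix (Fin Nr) (Fin Nr) ℂ).submatrix id er := by
    rw [hVratil, Stmt17Aux.mulSubId, hVra1]
  have h2 : Λra * ((1 : Matrix (Fin Nr) (Fin Nr) ℂ).submatrix id er) * DΨ = B := by
    rw [Stmt17Aux.mulSubId, Matrix.mul_one, hDΨ, hBdef]
    ext i j
    rw [Matrix.mul_diagonal]
    simp only [Matrix.submatrix_apply, id_eq, Matrix.of_apply, hΛra, Fin.coe_castLE, her]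
    split_ifs with h
    · push_cast; ring
    · simp
  have hHraΨ : Hra * Ψ = Ura * B * Uurtilᴴ := by
    rw [hHra, hΨ]
    calc Ura * Λra * Vraᴴ * (Vratil * DΨ * Uurtilᴴ)
        = Ura * (Λra * (Vraᴴ * Vratil) * DΨ) * Uurtilᴴ := by
          simp only [Matrix.mul_assoc]
      _ = Ura * B * Uurtilᴴ := by rw [h1, h2]
  have hUtU : Uurtilᴴ * Uurtil = 1 := by
    rw [hUurtil, Matrix.conjTranspose_submatrix, Stmt17Aux.subIdMul, Stmt17Aux.mulSubId, hUur1]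
    ext i j
    simp [Matrix.one_apply, Fin.castLE_inj, her]
  -- B * Bᴴ
  have hBB : B * Bᴴ = Matrix.diagonal (fun i => ((g i : ℝ) : ℂ)) := by
    ext i j
    simp only [Matrix.mul_apply, Matrix.conjTranspose_apply, hBdef, Matrix.of_apply,
      Matrix.diagonal_apply]
    by_cases hij : i = j
    · subst hij
      simp only [if_pos rfl]
      have hterm : ∀ k : Fin Ns,
          (if (i:ℕ) = (k:ℕ) then ((lamra (i:ℕ) * Real.sqrt (pΨ k) : ℝ) : ℂ) else 0) *
            star (if (i:ℕ) = (k:ℕ) then ((lamra (i:ℕ) * Real.sqrt (pΨ k) : ℝ) : ℂ) else 0)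
          = if (i:ℕ) = (k:ℕ)
              then ((lamra (i:ℕ) ^ 2 * pΨ k : ℝ) : ℂ) else 0 := by
        intro k
        split_ifs with h
        · rw [Complex.star_def, Complex.conj_ofReal, ← Complex.ofReal_mul]
          congr 1
          rw [mul_mul_mul_comm, ← sq, Real.mul_self_sqrt (hpΨ _)]
        · simp
      rw [Finset.sum_congr rfl (fun k _ => hterm k)]
      by_cases h : (i:ℕ) < Ns
      · rw [Stmt17Aux.key_sum2 _ i h, hgdef]
        simp [h]
      · rw [Stmt17Aux.key_sum2' _ i h, hgdef]
        simp [h]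
    · rw [if_neg hij]
      apply Finset.sum_eq_zero
      intro k _
      by_cases h1' : (i:ℕ) = (k:ℕ)
      · rw [if_neg (fun h2' : (j:ℕ) = (k:ℕ) => hij (Fin.ext (h1'.trans h2'.symm)))]
        simp
      · rw [if_neg h1']
        simp
  -- J diagonalized
  have hJd : J = Ura * Matrix.diagonal (fun i => ((d i : ℝ) : ℂ)) * Uraᴴ := by
    rw [hJ, hHraΨ]
    have e1 : (Ura * B * Uurtilᴴ) * (Ura * B * Uurtilᴴ)ᴴ
        = Ura * Matrix.diagonal (fun i => ((g i : ℝ) : ℂ)) * Uraᴴ := by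
      rw [Matrix.conjTranspose_mul, Matrix.conjTranspose_mul,
        Matrix.conjTranspose_conjTranspose]
      calc Ura * B * Uurtilᴴ * (Uurtil * (Bᴴ * Uraᴴ))
          = Ura * (B * (Uurtilᴴ * Uurtil) * Bᴴ) * Uraᴴ := by
            simp only [Matrix.mul_assoc]
        _ = Ura * Matrix.diagonal (fun i => ((g i : ℝ) : ℂ)) * Uraᴴ := by
            rw [hUtU, Matrix.mul_one, hBB]
    rw [e1]
    have e2 : (σa2:ℂ) • (1 : Matrix (Fin Na) (Fin Na) ℂ)
        = Ura * ((σa2:ℂ) • (1 : Matrix (Fin Na) (Fin Na) ℂ)) * Uraᴴ := by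
      rw [Matrix.mul_smul, Matrix.mul_one, Matrix.smul_mul, hUra2]
    have e3 : (σr2:ℂ) • (Ura * Matrix.diagonal (fun i => ((g i : ℝ) : ℂ)) * Uraᴴ)
        = Ura * ((σr2:ℂ) • Matrix.diagonal (fun i => ((g i : ℝ) : ℂ))) * Uraᴴ := by
      rw [Matrix.mul_smul, Matrix.smul_mul]
    rw [e3, e2, ← Matrix.add_mul, ← Matrix.mul_add]
    congr 2
    ext i j
    by_cases hij : i = j
    · subst hij
      simp only [Matrix.add_apply, Matrix.smul_apply, Matrix.diagonal_apply_eq,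
        Matrix.one_apply_eq, smul_eq_mul, hddef]
      push_cast
      ring
    · simp [Matrix.diagonal_apply, Matrix.one_apply, hij]
  -- inverse of J
  have hJinv : J⁻¹ = Ura * Matrix.diagonal (fun i => (((d i)⁻¹ : ℝ) : ℂ)) * Uraᴴ := by
    apply Matrix.inv_eq_right_inv
    rw [hJd]
    calc Ura * Matrix.diagonal (fun i => ((d i : ℝ) : ℂ)) * Uraᴴ *
          (Ura * Matrix.diagonal (fun i => (((d i)⁻¹ : ℝ) : ℂ)) * Uraᴴ)
        = Ura * (Matrix.diagonal (fun i => ((d i : ℝ) : ℂ)) * (Uraᴴ * Ura) *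
            Matrix.diagonal (fun i => (((d i)⁻¹ : ℝ) : ℂ))) * Uraᴴ := by
          simp only [Matrix.mul_assoc]
      _ = Ura * (Matrix.diagonal (fun i => ((d i : ℝ) : ℂ)) *
            Matrix.diagonal (fun i => (((d i)⁻¹ : ℝ) : ℂ))) * Uraᴴ := by
          rw [hUra1, Matrix.mul_one]
      _ = 1 := by
          rw [Matrix.diagonal_mul_diagonal]
          have : (fun i => ((d i : ℝ) : ℂ) * (((d i)⁻¹ : ℝ) : ℂ)) = fun _ : Fin Na => (1:ℂ) := by
            funext i
            rw [← Complex.ofReal_mul, mul_inv_cancel₀ (hdpos i).ne']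
            simp
          rw [this, Matrix.diagonal_one, Matrix.mul_one, hUra2]
  -- Htil diagonalized
  have h3 : Uurtilᴴ * Uur = (1 : Matrix (Fin Nr) (Fin Nr) ℂ).submatrix er id := by
    rw [hUurtil, Matrix.conjTranspose_submatrix, Stmt17Aux.subIdMul, hUur1]
  have h4 : Vurᴴ * Vurtil = (1 : Matrix (Fin Nu) (Fin Nu) ℂ).submatrix id eu := by
    rw [hVurtil, Stmt17Aux.mulSubId, hVur1]
  have hInner : (1 : Matrix (Fin Nr) (Fin Nr) ℂ).submatrix er id * Λur *
      ((1 : Matrix (Fin Nu) (Fin Nu) ℂ).submatrix id eu) * Du = C := by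
    rw [Stmt17Aux.subIdMul, Matrix.one_mul, Stmt17Aux.mulSubId, Matrix.mul_one,
      Matrix.submatrix_submatrix, hDu, hCdef]
    ext i j
    rw [Matrix.mul_diagonal]
    simp only [Matrix.submatrix_apply, Function.comp, id_eq, hΛur, Fin.coe_castLE,
      Matrix.diagonal_apply, her, heu]
    by_cases hij : i = j
    · subst hij
      simp only [if_pos rfl]
      push_cast
      ring
    · rw [if_neg (fun h => hij (Fin.ext h)), if_neg hij, zero_mul]
  have hBC : B * C = F := by
    rw [hBdef, hCdef, hFdef]
    ext i j
    rw [Matrix.mul_diagonal]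
    simp only [Matrix.of_apply]
    split_ifs with h
    · push_cast; ring
    · simp
  have hHtilF : Htil = Ura * F := by
    rw [hHtil, hHraΨ, hHur, hW]
    calc Ura * B * Uurtilᴴ * (Uur * Λur * Vurᴴ) * (Vurtil * Du)
        = Ura * (B * ((Uurtilᴴ * Uur) * Λur * (Vurᴴ * Vurtil) * Du)) := by
          simp only [Matrix.mul_assoc]
      _ = Ura * (B * C) := by rw [h3, h4, hInner]
      _ = Ura * F := by rw [hBC]
  -- the core computation
  have hCore : Fᴴ * Matrix.diagonal (fun i => (((d i)⁻¹ : ℝ) : ℂ)) * F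
      = Matrix.diagonal (fun i => ((x i : ℝ) : ℂ)) := by
    ext i j
    rw [Matrix.mul_apply]
    simp only [Matrix.mul_diagonal, Matrix.conjTranspose_apply, hFdef, Matrix.of_apply,
      Matrix.diagonal_apply]
    have hterm : ∀ k : Fin Na,
        star (if (k:ℕ) = (i:ℕ)
            then ((lamra (k:ℕ) * Real.sqrt (pΨ i) * (lamur (i:ℕ) * Real.sqrt (pu i)) : ℝ) : ℂ)
            else 0) * (((d k)⁻¹ : ℝ) : ℂ) *
          (if (k:ℕ) = (j:ℕ)
            then ((lamra (k:ℕ) * Real.sqrt (pΨ j) * (lamur (j:ℕ) * Real.sqrt (pu j)) : ℝ) : ℂ)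
            else 0)
        = if (k:ℕ) = (i:ℕ)
            then (((lamra (k:ℕ) * Real.sqrt (pΨ i) * (lamur (i:ℕ) * Real.sqrt (pu i)) : ℝ) : ℂ)
              * (((d k)⁻¹ : ℝ) : ℂ) *
              (if (k:ℕ) = (j:ℕ)
                then ((lamra (k:ℕ) * Real.sqrt (pΨ j) * (lamur (j:ℕ) * Real.sqrt (pu j)) : ℝ) : ℂ)
                else 0))
            else 0 := by
      intro k
      by_cases h : (k:ℕ) = (i:ℕ)
      · rw [if_pos h, if_pos h, Complex.star_def, Complex.conj_ofReal]
      · rw [if_neg h, if_neg h, star_zero, zero_mul, zero_mul]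
    rw [Finset.sum_congr rfl (fun k _ => hterm k)]
    rw [Stmt17Aux.key_sum hNsNa]
    simp only [← hea, Fin.coe_castLE]
    have heai : ((ea i : Fin Na) : ℕ) = (i : ℕ) := by simp [hea]
    rw [heai]
    by_cases hij : i = j
    · subst hij
      simp only [if_pos rfl, hxdef]
      push_cast
      ring
    · rw [if_neg (fun h : (i:ℕ) = (j:ℕ) => hij (Fin.ext h)), if_neg hij, mul_zero]
  have hM : Htilᴴ * J⁻¹ * Htil = Matrix.diagonal (fun i => ((x i : ℝ) : ℂ)) := by
    rw [hHtilF, hJinv, Matrix.conjTranspose_mul]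
    calc Fᴴ * Uraᴴ * (Ura * Matrix.diagonal (fun i => (((d i)⁻¹ : ℝ) : ℂ)) * Uraᴴ) * (Ura * F)
        = Fᴴ * ((Uraᴴ * Ura) * Matrix.diagonal (fun i => (((d i)⁻¹ : ℝ) : ℂ)) * (Uraᴴ * Ura)) * F := by
          simp only [Matrix.mul_assoc]
      _ = Fᴴ * Matrix.diagonal (fun i => (((d i)⁻¹ : ℝ) : ℂ)) * F := by
          rw [hUra1, Matrix.one_mul, Matrix.mul_one]
      _ = Matrix.diagonal (fun i => ((x i : ℝ) : ℂ)) := hCore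
  -- conclusion
  have hxnn : ∀ i, 0 ≤ x i := by
    intro i
    rw [hxdef]
    exact mul_nonneg (sq_nonneg _) (inv_nonneg.2 (hdpos _).le)
  have hdiag : (1 : Matrix (Fin Ns) (Fin Ns) ℂ) + Htilᴴ * J⁻¹ * Htil
      = Matrix.diagonal (fun i => ((1 + x i : ℝ) : ℂ)) := by
    rw [hM, ← Matrix.diagonal_one, Matrix.diagonal_add]
    congr 1
    funext i
    push_cast
    ring
  rw [hdiag, Matrix.det_diagonal, ← Complex.ofReal_prod, Complex.ofReal_re]
  rw [Real.log_prod (fun i _ => ne_of_gt (by linarith [hxnn i]))]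
  apply Finset.sum_congr rfl
  intro i _
  congr 1
  have hsq : (lamra (i:ℕ) * Real.sqrt (pΨ i) * (lamur (i:ℕ) * Real.sqrt (pu i))) ^ 2
      = lamra (i:ℕ) ^ 2 * pΨ i * lamur (i:ℕ) ^ 2 * pu i := by
    rw [mul_pow, mul_pow, mul_pow, Real.sq_sqrt (hpΨ i), Real.sq_sqrt (hpu i)]
    ring
  have hlt : ((ea i : Fin Na) : ℕ) < Ns := by simp [hea]
  have hdi : d (ea i) = σr2 * lamra (i:ℕ) ^ 2 * pΨ i + σa2 := by
    simp only [hddef, hgdef]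
    rw [dif_pos hlt]
    have h1 : (⟨((ea i : Fin Na) : ℕ), hlt⟩ : Fin Ns) = i := by
      apply Fin.ext; simp [hea]
    rw [h1]
    have h2 : ((ea i : Fin Na) : ℕ) = (i : ℕ) := by simp [hea]
    rw [h2, ← mul_assoc]
  rw [hxdef]
  dsimp only
  rw [hsq, hdi, ← div_eq_mul_inv]
end
end
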